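/- For every δ with 0 < δ < 1/200 there exists k₀ ≥ 1 (depending only on δ) such that the following holds for every real k ≥ k₀. Let A be a normed ring, and let a, d ∈ A satisfy ‖a‖ ≤ 2k^{2δ}, ‖a³‖ ≤ 2k^{−1/5+21δ}, and ‖d‖ ≤ 4k^{−1−δ}. Then for every integer r ≥ 1, ‖(a+d)^r − a^r‖ ≤ 8^r · ‖d‖ · k^{8δ} · k^{−(1/5−21δ)·⌊max(r−3,0)/3⌋}. -/

import Mathlib

/-!
Telescoping gives `(a + d)^r - a^r = ∑_{j<r} (a + d)^j d a^(r-1-j)`. Both `a` and `a + d` have norm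
`O(k^{2δ})` and a cube of norm `O(k^{-1/5+21δ})`: for `a + d` this is because
`‖(a + d)^3 - a^3‖ = O(k^{4δ} ‖d‖) = O(k^{-1+3δ})`. Writing `j = 3⌊j/3⌋ + j % 3`, each power is
controlled by at most two factors of the norm and `⌊j/3⌋` factors of the cube's norm, so every term
of the sum is at most `6^j 2^(r-1-j) ‖d‖ k^{8δ} k^{-(1/5-21δ)⌊(r-3)/3⌋}`, and
`∑_{j<r} 6^j 2^(r-1-j) = (6^r - 2^r)/4 ≤ 8^r`. Since `-1 + 3δ ≤ -1/5 + 21δ`, all of this holds as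
soon as `k ≥ 1`.
-/

open Finset MulOpposite

theorem pow_sub_pow_eq_sum {R : Type*} [Ring R] (a b : R) (r : ℕ) :
    b ^ r - a ^ r = ∑ j ∈ range r, b ^ j * (b - a) * a ^ (r - 1 - j) := by
  have step : ∀ j ∈ range r,
      b ^ j * (b - a) * a ^ (r - 1 - j) = b ^ (j + 1) * a ^ (r - (j + 1)) - b ^ j * a ^ (r - j) := by
    intro j hj
    rw [mem_range] at hj
    rw [show r - j = r - 1 - j + 1 by omega, show r - (j + 1) = r - 1 - j by omega, pow_succ,
      pow_succ']
    noncomm_ring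
  rw [sum_congr rfl step, sum_range_sub (fun j ↦ b ^ j * a ^ (r - j))]
  simp

section NormedRing

variable {A : Type*} [NormedRing A]

-- `‖1‖` may exceed `1` in a normed ring, so powers are estimated as multipliers, not through `‖x ^ n‖`.

theorem norm_pow_mul_le {x : A} {M : ℝ} (hM : 0 ≤ M) (hx : ‖x‖ ≤ M) (n : ℕ) (y : A) :
    ‖x ^ n * y‖ ≤ M ^ n * ‖y‖ := by
  induction n generalizing y with
  | zero => simp
  | succ n ih =>
    calc ‖x ^ (n + 1) * y‖ = ‖x ^ n * (x * y)‖ := by rw [pow_succ, mul_assoc]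
      _ ≤ M ^ n * ‖x * y‖ := ih _
      _ ≤ M ^ n * (M * ‖y‖) := by gcongr; exact norm_mul_le_of_le hx le_rfl
      _ = M ^ (n + 1) * ‖y‖ := by ring

theorem norm_pow_mul_le_of_norm_pow_three_le {x : A} {M m : ℝ} (hM : 0 ≤ M) (hm : 0 ≤ m)
    (hx : ‖x‖ ≤ M) (hx3 : ‖x ^ 3‖ ≤ m) (j : ℕ) (y : A) :
    ‖x ^ j * y‖ ≤ M ^ (j % 3) * m ^ (j / 3) * ‖y‖ := by
  have hsplit : x ^ j = (x ^ 3) ^ (j / 3) * x ^ (j % 3) := by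
    rw [← pow_mul, ← pow_add, Nat.div_add_mod]
  calc ‖x ^ j * y‖ = ‖(x ^ 3) ^ (j / 3) * (x ^ (j % 3) * y)‖ := by rw [hsplit, mul_assoc]
    _ ≤ m ^ (j / 3) * ‖x ^ (j % 3) * y‖ := norm_pow_mul_le hm hx3 _ _
    _ ≤ m ^ (j / 3) * (M ^ (j % 3) * ‖y‖) := by gcongr; exact norm_pow_mul_le hM hx _ _
    _ = M ^ (j % 3) * m ^ (j / 3) * ‖y‖ := by ring

theorem norm_mul_pow_le_of_norm_pow_three_le {x : A} {M m : ℝ} (hM : 0 ≤ M) (hm : 0 ≤ m)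
    (hx : ‖x‖ ≤ M) (hx3 : ‖x ^ 3‖ ≤ m) (j : ℕ) (y : A) :
    ‖y * x ^ j‖ ≤ ‖y‖ * (M ^ (j % 3) * m ^ (j / 3)) := by
  have h := norm_pow_mul_le_of_norm_pow_three_le (x := op x) hM hm (by rwa [norm_op])
    (by rwa [← op_pow, norm_op]) j (op y)
  rw [← op_pow, ← op_mul, norm_op, norm_op] at h
  linarith

theorem norm_pow_sub_pow_le {a b : A} {α β : ℕ → ℝ} (hα : ∀ i, 0 ≤ α i)
    (hb : ∀ j y, ‖b ^ j * y‖ ≤ β j * ‖y‖) (ha : ∀ i y, ‖y * a ^ i‖ ≤ ‖y‖ * α i) (r : ℕ) :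
    ‖b ^ r - a ^ r‖ ≤ ‖b - a‖ * ∑ j ∈ range r, β j * α (r - 1 - j) := by
  rw [pow_sub_pow_eq_sum, mul_sum]
  refine (norm_sum_le _ _).trans (sum_le_sum fun j _ ↦ ?_)
  calc ‖b ^ j * (b - a) * a ^ (r - 1 - j)‖ ≤ ‖b ^ j * (b - a)‖ * α (r - 1 - j) := ha _ _
    _ ≤ β j * ‖b - a‖ * α (r - 1 - j) := by gcongr; exacts [hα _, hb _ _]
    _ = ‖b - a‖ * (β j * α (r - 1 - j)) := by ring

end NormedRing

theorem sum_range_six_pow_mul_two_pow_le (r : ℕ) :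
    ∑ j ∈ range r, (6 : ℝ) ^ j * 2 ^ (r - 1 - j) ≤ 8 ^ r := by
  have h := geom_sum₂_mul (6 : ℝ) 2 r
  norm_num at h
  have h6 : (6 : ℝ) ^ r ≤ 8 ^ r := by gcongr; norm_num
  have h2 : (0 : ℝ) ≤ 2 ^ r := by positivity
  have h8 : (0 : ℝ) ≤ 8 ^ r := by positivity
  linarith

theorem pow_mod_three_mul_pow_div_three_eq {c P Q : ℝ} (j : ℕ) :
    (c * P) ^ (j % 3) * (c ^ 3 * Q) ^ (j / 3) = c ^ j * (P ^ (j % 3) * Q ^ (j / 3)) := by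
  have hc : c ^ j = c ^ (j % 3) * (c ^ 3) ^ (j / 3) := by
    rw [← pow_mul, ← pow_add, Nat.mod_add_div]
  rw [hc, mul_pow, mul_pow]
  ring

theorem pow_mod_three_mul_pow_div_three_mul_le {P Q : ℝ} (hP : 1 ≤ P) (hQ0 : 0 ≤ Q)
    (hQ1 : Q ≤ 1) {j r : ℕ} (hj : j < r) :
    P ^ (j % 3) * Q ^ (j / 3) * (P ^ ((r - 1 - j) % 3) * Q ^ ((r - 1 - j) / 3))
      ≤ P ^ 4 * Q ^ ((r - 3) / 3) := by
  rw [mul_mul_mul_comm, ← pow_add, ← pow_add]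
  exact mul_le_mul (pow_le_pow_right₀ hP (by omega)) (pow_le_pow_of_le_one hQ0 hQ1 (by omega))
    (by positivity) (by positivity)

theorem norm_add_pow_sub_pow_le {A : Type*} [NormedRing A] {a d : A} {P Q ε : ℝ} (hP : 1 ≤ P)
    (hQ0 : 0 ≤ Q) (hQ1 : Q ≤ 1) (hε : ε ≤ 1) (hPε : P ^ 2 * ε ≤ Q) (ha : ‖a‖ ≤ 2 * P)
    (ha3 : ‖a ^ 3‖ ≤ 2 * Q) (hd : ‖d‖ ≤ 4 * ε) (r : ℕ) :
    ‖(a + d) ^ r - a ^ r‖ ≤ 8 ^ r * ‖d‖ * P ^ 4 * Q ^ ((r - 3) / 3) := by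
  set b := a + d
  have hba : b - a = d := add_sub_cancel_left a d
  have hb : ‖b‖ ≤ 6 * P := (norm_add_le a d).trans (by linarith)
  have ha_right : ∀ i y, ‖y * a ^ i‖ ≤ ‖y‖ * (2 ^ i * (P ^ (i % 3) * Q ^ (i / 3))) := by
    intro i y
    rw [← pow_mod_three_mul_pow_div_three_eq]
    exact norm_mul_pow_le_of_norm_pow_three_le (by positivity) (by positivity) ha
      (by linarith) i y
  have hα : ∀ i, 0 ≤ (2 : ℝ) ^ i * (P ^ (i % 3) * Q ^ (i / 3)) := fun i ↦ by positivity
  have hb3 : ‖b ^ 3‖ ≤ 6 ^ 3 * Q := by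
    have h := norm_pow_sub_pow_le hα (norm_pow_mul_le (by positivity) hb) ha_right 3
    simp only [sum_range_succ, sum_range_zero, hba] at h
    norm_num at h
    calc ‖b ^ 3‖ ≤ ‖a ^ 3‖ + ‖b ^ 3 - a ^ 3‖ := norm_le_insert' _ _
      _ ≤ 6 ^ 3 * Q := by nlinarith [norm_nonneg d]
  have hb_left : ∀ j y, ‖b ^ j * y‖ ≤ 6 ^ j * (P ^ (j % 3) * Q ^ (j / 3)) * ‖y‖ := by
    intro j y
    rw [← pow_mod_three_mul_pow_div_three_eq]
    exact norm_pow_mul_le_of_norm_pow_three_le (by positivity) (by positivity) hb hb3 j y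
  calc ‖b ^ r - a ^ r‖
      ≤ ‖d‖ * ∑ j ∈ range r, 6 ^ j * (P ^ (j % 3) * Q ^ (j / 3))
          * (2 ^ (r - 1 - j) * (P ^ ((r - 1 - j) % 3) * Q ^ ((r - 1 - j) / 3))) := by
        rw [← hba]; exact norm_pow_sub_pow_le hα hb_left ha_right r
    _ ≤ ‖d‖ * ∑ j ∈ range r, (6 : ℝ) ^ j * 2 ^ (r - 1 - j) * (P ^ 4 * Q ^ ((r - 3) / 3)) := by
        refine mul_le_mul_of_nonneg_left (sum_le_sum fun j hj ↦ ?_) (norm_nonneg d)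
        rw [mul_mul_mul_comm]
        exact mul_le_mul_of_nonneg_left
          (pow_mod_three_mul_pow_div_three_mul_le hP hQ0 hQ1 (mem_range.mp hj)) (by positivity)
    _ ≤ ‖d‖ * (8 ^ r * (P ^ 4 * Q ^ ((r - 3) / 3))) := by
        rw [← sum_mul]; gcongr; exact sum_range_six_pow_mul_two_pow_le r
    _ = 8 ^ r * ‖d‖ * P ^ 4 * Q ^ ((r - 3) / 3) := by ring

/-- Abstract form of the perturbative step (3.39)–(3.40): if `‖a‖ ≤ 2k^{2δ}`,
`‖a³‖ ≤ 2k^{−1/5+21δ}` and `‖d‖ ≤ 4k^{−1−δ}` in a normed ring, then for all `r ≥ 1`,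
`‖(a+d)^r − a^r‖ ≤ 8^r ‖d‖ k^{8δ} k^{−(1/5−21δ)⌊max(r−3,0)/3⌋}`, provided `k` is
sufficiently large depending only on `δ ∈ (0, 1/200)`. -/
theorem pow_perturbation_bound (δ : ℝ) (hδ0 : 0 < δ) (hδ : δ < 1 / 200) :
    ∃ k₀ : ℝ, 1 ≤ k₀ ∧ ∀ k : ℝ, k₀ ≤ k →
      ∀ (A : Type) [NormedRing A], ∀ a d : A,
        ‖a‖ ≤ 2 * k ^ (2 * δ) →
        ‖a ^ 3‖ ≤ 2 * k ^ (-(1 / 5) + 21 * δ) →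
        ‖d‖ ≤ 4 * k ^ (-1 - δ) →
        ∀ r : ℕ, 1 ≤ r →
          ‖(a + d) ^ r - a ^ r‖
            ≤ 8 ^ r * ‖d‖ * k ^ (8 * δ)
              * k ^ (-(1 / 5 - 21 * δ) * (((r - 3) / 3 : ℕ) : ℝ)) := by
  refine ⟨1, le_rfl, fun k hk A _ a d ha ha3 hd r _ ↦ ?_⟩
  have hk0 : 0 ≤ k := zero_le_one.trans hk
  have hPε : (k ^ (2 * δ)) ^ 2 * k ^ (-1 - δ) ≤ k ^ (-(1 / 5) + 21 * δ) := by
    rw [← Real.rpow_mul_natCast hk0, ← Real.rpow_add (zero_lt_one.trans_le hk)]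
    exact Real.rpow_le_rpow_of_exponent_le hk (by push_cast; linarith)
  have hbound := norm_add_pow_sub_pow_le (Real.one_le_rpow hk (by linarith))
    (Real.rpow_nonneg hk0 _) (Real.rpow_le_one_of_one_le_of_nonpos hk (by linarith))
    (Real.rpow_le_one_of_one_le_of_nonpos hk (by linarith)) hPε ha ha3 hd r
  rw [← Real.rpow_mul_natCast hk0, ← Real.rpow_mul_natCast hk0] at hbound
  convert hbound using 4 <;> push_cast <;> ring
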